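/- Let 1 ≤ q < ∞ and v, w weights on (0,∞). Let k(x,y) be a kernel (non-increasing in x, non-decreasing in y, satisfying k(x,z) ≤ d(k(x,y)+k(y,z)) for 0 ≤ x < y < z, and k(0,y) > 0 for y > 0). Then the best constant C in (∫_0^∞ (∫_x^∞ k(x,y) h(y) dy)^q w(x) dx)^{1/q} ≤ C ∫_0^∞ h v for all nonnegative measurable h satisfies C ≈ O₁ + O₂, where O₁ = sup_{t>0} (∫_0^t w(x) k(x,t)^q dx)^{1/q} ess sup_{s≥t} v(s)^{−1} and O₂ = sup_{t>0} (∫_0^t w)^{1/q} ess sup_{s≥t} k(t,s) v(s)^{−1}. -/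

import Mathlib

open MeasureTheory ENNReal Set

/-- A weight on `(0,∞)`: measurable, with positive finite integral over each `(0,x]`. -/
def IsWeight (v : ℝ → ℝ≥0∞) : Prop :=
  Measurable v ∧ ∀ x > (0 : ℝ),
    (0 < ∫⁻ t in Set.Ioc 0 x, v t) ∧ (∫⁻ t in Set.Ioc 0 x, v t) < ∞

/-!
For an operator on `L¹(v)` the norm is controlled column by column. By Minkowski's integral
inequality the best constant is at most `ess sup_y v(y)⁻¹ (∫_0^y w k(·,y)^q)^{1/q}`; testing on
indicators of sets where `v⁻¹` is close to its essential supremum over `[t,∞)` shows, as `k` is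
non-decreasing in its second variable, that `O₁` is at most the best constant. Since a function is
a.e. dominated by its essential supremum over `[y,∞)`, the column bound is at most `O₁`, so the
best constant equals `O₁`. Finally `O₂ ≤ O₁`, because `k` is non-increasing in its first variable.
-/

section Minkowski

variable {α β : Type*} [MeasurableSpace α] [MeasurableSpace β] {μ : Measure α} {ν : Measure β}

theorem lintegral_le_of_forall_lintegral_ne_top [SigmaFinite μ] {F : α → ℝ≥0∞} {c : ℝ≥0∞}
    (h : ∀ g : α → ℝ≥0∞, Measurable g → g ≤ F → ∫⁻ x, g x ∂μ ≠ ∞ → ∫⁻ x, g x ∂μ ≤ c) :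
    ∫⁻ x, F x ∂μ ≤ c := by
  rw [lintegral_eq_nnreal]
  refine iSup₂_le fun φ hφF => le_of_forall_lt_imp_le_of_dense fun L hL => ?_
  rw [← SimpleFunc.lintegral_eq_lintegral] at hL
  obtain ⟨g, hgφ, hgfin, hLg⟩ := SimpleFunc.exists_lt_lintegral_simpleFunc_of_lt_lintegral hL
  exact hLg.le.trans <| h _ g.measurable.coe_nnreal_ennreal
    (fun x => (coe_le_coe.2 (hgφ x)).trans (hφF x)) hgfin.ne

/-- Hölder's inequality against `ψ ^ (q - 1)` bounds `∫ ψ ^ q` by the right-hand side times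
`(∫ ψ ^ q) ^ (1 - 1 / q)`, and this finite factor cancels. -/
theorem lintegral_rpow_le_of_le_lintegral [SFinite μ] [SFinite ν] {q : ℝ} (hq : 1 < q)
    {f : α → β → ℝ≥0∞} (hf : Measurable (Function.uncurry f)) {ψ : α → ℝ≥0∞}
    (hψ : Measurable ψ) (hψf : ∀ x, ψ x ≤ ∫⁻ y, f x y ∂ν) (hfin : ∫⁻ x, ψ x ^ q ∂μ ≠ ∞) :
    (∫⁻ x, ψ x ^ q ∂μ) ^ (1 / q) ≤ ∫⁻ y, (∫⁻ x, f x y ^ q ∂μ) ^ (1 / q) ∂ν := by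
  set A := ∫⁻ x, ψ x ^ q ∂μ
  set R := ∫⁻ y, (∫⁻ x, f x y ^ q ∂μ) ^ (1 / q) ∂ν
  have hpq : q.HolderConjugate q.conjExponent := .conjExponent hq
  have hA : A ≤ R * A ^ (1 / q.conjExponent) :=
    calc A = ∫⁻ x, ψ x * ψ x ^ (q - 1) ∂μ := by
          refine lintegral_congr fun x => ?_
          have := ENNReal.rpow_add_of_nonneg (x := ψ x) 1 (q - 1) zero_le_one (by linarith)
          rwa [add_sub_cancel, ENNReal.rpow_one] at this
      _ ≤ ∫⁻ x, (∫⁻ y, f x y ∂ν) * ψ x ^ (q - 1) ∂μ := by gcongr with x; exact hψf x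
      _ = ∫⁻ y, ∫⁻ x, f x y * ψ x ^ (q - 1) ∂μ ∂ν := by
          simp_rw [← lintegral_mul_const'' _ hf.of_uncurry_left.aemeasurable]
          exact lintegral_lintegral_swap
            (hf.mul ((hψ.comp measurable_fst).pow_const _)).aemeasurable
      _ ≤ ∫⁻ y, (∫⁻ x, f x y ^ q ∂μ) ^ (1 / q) * A ^ (1 / q.conjExponent) ∂ν := by
          gcongr with y
          exact lintegral_mul_rpow_le_lintegral_rpow_mul_lintegral_rpow hpq
            hf.of_uncurry_right.aemeasurable hψ.aemeasurable
      _ = R * A ^ (1 / q.conjExponent) :=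
          lintegral_mul_const' _ _ (rpow_ne_top_of_nonneg hpq.symm.one_div_nonneg hfin)
  rcases eq_or_ne A 0 with hA0 | hA0
  · simp [hA0, hpq.pos]
  have hA' : A ^ (1 / q.conjExponent) ≠ 0 := (ENNReal.rpow_pos (pos_iff_ne_zero.2 hA0) hfin).ne'
  have hA'' : A ^ (1 / q.conjExponent) ≠ ∞ := rpow_ne_top_of_nonneg hpq.symm.one_div_nonneg hfin
  rwa [← ENNReal.mul_le_mul_iff_left hA' hA'', ← ENNReal.rpow_add _ _ hA0 hfin,
    hpq.one_div_add_one_div, div_one, ENNReal.rpow_one]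

/-- **Minkowski's integral inequality** for `ℝ≥0∞`-valued functions. -/
theorem lintegral_lintegral_rpow_le [SigmaFinite μ] [SFinite ν] {q : ℝ} (hq : 1 ≤ q)
    {f : α → β → ℝ≥0∞} (hf : Measurable (Function.uncurry f)) :
    (∫⁻ x, (∫⁻ y, f x y ∂ν) ^ q ∂μ) ^ (1 / q) ≤ ∫⁻ y, (∫⁻ x, f x y ^ q ∂μ) ^ (1 / q) ∂ν := by
  rcases hq.eq_or_lt with rfl | hq
  · simpa using (lintegral_lintegral_swap hf.aemeasurable).le
  have hq0 : 0 < q := zero_lt_one.trans hq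
  rw [one_div, ENNReal.rpow_inv_le_iff hq0]
  refine lintegral_le_of_forall_lintegral_ne_top fun g hg hgF hgfin => ?_
  have hψ : ∀ x, (g x ^ q⁻¹) ^ q = g x := fun x => ENNReal.rpow_inv_rpow hq0.ne' (g x)
  have key := lintegral_rpow_le_of_le_lintegral hq hf (hg.pow_const q⁻¹)
    (fun x => (ENNReal.rpow_inv_le_iff hq0).2 (hgF x)) (by simpa only [hψ] using hgfin)
  simp only [hψ, one_div] at key
  exact (ENNReal.rpow_inv_le_iff hq0).1 key

end Minkowski

/-- The tail essential supremum `g y = essSup f (μ.restrict (Ici y))` is antitone, hence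
continuous off a countable set; at a continuity point `y`, the a.e. bounds `f y ≤ g r` for rational
`r ≤ y` pass to the limit `r → y⁻`. -/
theorem ae_le_essSup_restrict_Ici {μ : Measure ℝ} [NullSingletonClass μ] (f : ℝ → ℝ≥0∞) :
    ∀ᵐ y ∂μ, f y ≤ essSup f (μ.restrict (Ici y)) := by
  set g : ℝ → ℝ≥0∞ := fun t => essSup f (μ.restrict (Ici t))
  have hg : Antitone g := fun s t hst =>
    essSup_mono_measure' (Measure.restrict_mono (Ici_subset_Ici.2 hst) le_rfl)
  have hrat : ∀ᵐ y ∂μ, ∀ r : ℚ, (r : ℝ) ≤ y → f y ≤ g r := by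
    refine ae_all_iff.2 fun r => ?_
    exact (ae_restrict_iff' measurableSet_Ici).1 (ENNReal.ae_le_essSup f)
  filter_upwards [hrat, hg.countable_not_continuousAt.ae_notMem μ] with y hy hcont
  refine ge_of_tendsto ((not_not.1 hcont).tendsto.mono_left nhdsWithin_le_nhds)
    (eventually_nhdsWithin_of_forall (s := Iio y) fun t (ht : t < y) => ?_)
  obtain ⟨r, htr, hry⟩ := exists_rat_btwn ht
  exact (hy r hry.le).trans (hg htr.le)

theorem exists_subset_lt_of_lt_essSup {α : Type*} [MeasurableSpace α] {μ : Measure α}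
    [SigmaFinite μ] {f : α → ℝ≥0∞} (hf : Measurable f) {s : Set α} (hs : MeasurableSet s)
    {c : ℝ≥0∞} (hc : c < essSup f (μ.restrict s)) :
    ∃ B ⊆ s, MeasurableSet B ∧ 0 < μ B ∧ μ B < ∞ ∧ ∀ x ∈ B, c < f x := by
  have hpos : 0 < μ ({x | c < f x} ∩ s) := by
    refine pos_iff_ne_zero.2 fun h0 => hc.not_ge (essSup_le_of_ae_le c ?_)
    rw [Filter.EventuallyLE, ae_iff, Measure.restrict_apply' hs]
    simpa only [not_le] using h0
  obtain ⟨B, hBm, hBs, hB0, hBtop⟩ :=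
    Measure.exists_subset_measure_lt_top ((measurableSet_lt measurable_const hf).inter hs) hpos
  exact ⟨B, fun x hx => (hBs hx).2, hBm, hB0, hBtop, fun x hx => (hBs hx).1⟩

noncomputable section

namespace Oinarov

variable (q : ℝ) (v w : ℝ → ℝ≥0∞) (k : ℝ → ℝ → ℝ≥0∞)

def IsBound (C : ℝ≥0∞) : Prop :=
  ∀ h : ℝ → ℝ≥0∞, Measurable h →
    (∫⁻ x in Ioi (0 : ℝ), (∫⁻ y in Ioi x, k x y * h y) ^ q * w x) ^ (1 / q)
      ≤ C * ∫⁻ y in Ioi (0 : ℝ), h y * v y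

def bestConst : ℝ≥0∞ := sInf {C | IsBound q v w k C}

def O₁ : ℝ≥0∞ :=
  ⨆ t ∈ Ioi (0 : ℝ), (∫⁻ s in Ioc 0 t, w s * k s t ^ q) ^ (1 / q) *
    essSup (fun s => (v s)⁻¹) (volume.restrict (Ici t))

def O₂ : ℝ≥0∞ :=
  ⨆ t ∈ Ioi (0 : ℝ), (∫⁻ s in Ioc 0 t, w s) ^ (1 / q) *
    essSup (fun s => k t s * (v s)⁻¹) (volume.restrict (Ici t))

variable {q v w k}

theorem le_O₁ {t : ℝ} (ht : 0 < t) :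
    (∫⁻ s in Ioc 0 t, w s * k s t ^ q) ^ (1 / q) *
      essSup (fun s => (v s)⁻¹) (volume.restrict (Ici t)) ≤ O₁ q v w k :=
  le_iSup₂ (f := fun t (_ : t ∈ Ioi 0) => (∫⁻ s in Ioc 0 t, w s * k s t ^ q) ^ (1 / q) *
    essSup (fun s => (v s)⁻¹) (volume.restrict (Ici t))) t ht

/-- Test the bound on the indicator of `B`: for `x < t` the operator applied to it is at least
`k x t * volume B`. -/
theorem IsBound.volume_mul_le (hq : 0 < q)
    (hk : ∀ x, MonotoneOn (fun y => k x y) (Ici 0)) {C : ℝ≥0∞} (hC : IsBound q v w k C)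
    {t : ℝ} (ht : 0 < t) {B : Set ℝ} (hB : MeasurableSet B) (hBt : B ⊆ Ici t)
    (hBtop : volume B ≠ ∞) :
    volume B * (∫⁻ s in Ioc 0 t, w s * k s t ^ q) ^ (1 / q) ≤ C * ∫⁻ y in B, v y := by
  have hinner : ∀ x ∈ Ioo 0 t, k x t * volume B ≤ ∫⁻ y in Ioi x, k x y * B.indicator 1 y := by
    intro x hx
    calc k x t * volume B = ∫⁻ y in Ioi x, k x t * B.indicator 1 y := by
          rw [lintegral_const_mul _ (measurable_one.indicator hB), lintegral_indicator_one hB,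
            Measure.restrict_apply hB,
            inter_eq_self_of_subset_left (hBt.trans (Ici_subset_Ioi.2 hx.2))]
      _ ≤ ∫⁻ y in Ioi x, k x y * B.indicator 1 y := by
          refine lintegral_mono fun y => ?_
          by_cases hy : y ∈ B
          · gcongr
            exact hk x ht.le (ht.le.trans (hBt hy)) (hBt hy)
          · simp [hy]
  calc volume B * (∫⁻ s in Ioc 0 t, w s * k s t ^ q) ^ (1 / q)
      = (volume B ^ q * ∫⁻ x in Ioo 0 t, w x * k x t ^ q) ^ (1 / q) := by
        rw [setLIntegral_congr Ioo_ae_eq_Ioc, ENNReal.mul_rpow_of_nonneg _ _ (by positivity),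
          ← ENNReal.rpow_mul, mul_one_div_cancel hq.ne', ENNReal.rpow_one]
    _ = (∫⁻ x in Ioo 0 t, (k x t * volume B) ^ q * w x) ^ (1 / q) := by
        rw [← lintegral_const_mul' _ _ (rpow_ne_top_of_nonneg hq.le hBtop)]
        congr 1
        refine lintegral_congr fun x => ?_
        rw [ENNReal.mul_rpow_of_nonneg _ _ hq.le]
        ring
    _ ≤ (∫⁻ x in Ioi 0, (∫⁻ y in Ioi x, k x y * B.indicator 1 y) ^ q * w x) ^ (1 / q) := by
        gcongr ?_ ^ _
        calc _ ≤ ∫⁻ x in Ioo 0 t, (∫⁻ y in Ioi x, k x y * B.indicator 1 y) ^ q * w x :=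
              setLIntegral_mono' measurableSet_Ioo fun x hx => by gcongr; exact hinner x hx
          _ ≤ _ := lintegral_mono_set Ioo_subset_Ioi_self
    _ ≤ C * ∫⁻ y in Ioi 0, B.indicator 1 y * v y := hC _ (measurable_one.indicator hB)
    _ = C * ∫⁻ y in B, v y := by
        simp_rw [← indicator_mul_left, Pi.one_apply, one_mul]
        rw [lintegral_indicator hB, Measure.restrict_restrict hB,
          inter_eq_self_of_subset_left (hBt.trans (Ici_subset_Ioi.2 ht))]

theorem IsBound.O₁_le (hq : 0 < q) (hv : Measurable v)
    (hk : ∀ x, MonotoneOn (fun y => k x y) (Ici 0)) {C : ℝ≥0∞} (hC : IsBound q v w k C) :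
    O₁ q v w k ≤ C := by
  refine iSup₂_le fun t ht => ENNReal.mul_le_of_forall_lt fun a ha c hc => ?_
  refine (mul_le_mul_left ha.le c).trans ?_
  rcases eq_or_ne c 0 with rfl | hc0
  · simp
  obtain ⟨B, hBt, hB, hB0, hBtop, hBv⟩ :=
    exists_subset_lt_of_lt_essSup hv.inv measurableSet_Ici hc
  have hvB : ∫⁻ y in B, v y ≤ c⁻¹ * volume B :=
    calc ∫⁻ y in B, v y ≤ ∫⁻ _ in B, c⁻¹ :=
          setLIntegral_mono' hB fun y hy => (lt_inv_iff_lt_inv.1 (hBv y hy)).le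
      _ = c⁻¹ * volume B := setLIntegral_const _ _
  have hW := (hC.volume_mul_le hq hk ht hB hBt hBtop.ne).trans (mul_le_mul_right hvB C)
  rw [mul_comm, ← mul_assoc, ENNReal.mul_le_mul_iff_left hB0.ne' hBtop.ne] at hW
  calc _ ≤ C * c⁻¹ * c := mul_le_mul_left hW c
    _ ≤ C := by rw [mul_assoc]; exact mul_le_of_le_one_right' (ENNReal.inv_mul_le_one c)

theorem O₂_le_O₁ (hq : 0 < q) (hk : ∀ y, AntitoneOn (fun x => k x y) (Ici 0)) :
    O₂ q v w k ≤ O₁ q v w k := by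
  refine iSup₂_le fun t (ht : 0 < t) => ?_
  rw [← ENNReal.essSup_const_mul]
  refine essSup_le_of_ae_le _ ?_
  filter_upwards [ae_restrict_mem measurableSet_Ici,
    ae_restrict_of_ae (ae_le_essSup_restrict_Ici (μ := volume) fun s => (v s)⁻¹)]
    with s (hts : t ≤ s) hs
  have hkts : (∫⁻ x in Ioc 0 t, w x) * k t s ^ q ≤ ∫⁻ x in Ioc 0 s, w x * k x s ^ q :=
    calc (∫⁻ x in Ioc 0 t, w x) * k t s ^ q ≤ ∫⁻ x in Ioc 0 t, w x * k t s ^ q :=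
          lintegral_mul_const_le _ _
      _ ≤ ∫⁻ x in Ioc 0 t, w x * k x s ^ q :=
          setLIntegral_mono' measurableSet_Ioc fun x hx => by
            gcongr
            exact hk s hx.1.le ht.le hx.2
      _ ≤ ∫⁻ x in Ioc 0 s, w x * k x s ^ q := lintegral_mono_set (Ioc_subset_Ioc_right hts)
  calc (∫⁻ x in Ioc 0 t, w x) ^ (1 / q) * (k t s * (v s)⁻¹)
      = ((∫⁻ x in Ioc 0 t, w x) * k t s ^ q) ^ (1 / q) * (v s)⁻¹ := by
        rw [ENNReal.mul_rpow_of_nonneg _ _ (by positivity), ← ENNReal.rpow_mul,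
          mul_one_div_cancel hq.ne', ENNReal.rpow_one, mul_assoc]
    _ ≤ (∫⁻ x in Ioc 0 s, w x * k x s ^ q) ^ (1 / q) *
          essSup (fun s => (v s)⁻¹) (volume.restrict (Ici s)) := by
        gcongr
    _ ≤ O₁ q v w k := le_O₁ (ht.trans_le hts)

/-- Minkowski's integral inequality for `(x, y) ↦ w(x)^{1/q} k(x, y) h(y)` on `0 < x < y`. -/
theorem lintegral_volterra_le (hq : 1 ≤ q) (hw : Measurable w)
    (hk : Measurable (Function.uncurry k)) {h : ℝ → ℝ≥0∞} (hh : Measurable h) :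
    (∫⁻ x in Ioi 0, (∫⁻ y in Ioi x, k x y * h y) ^ q * w x) ^ (1 / q) ≤
      ∫⁻ y in Ioi 0, h y * (∫⁻ s in Ioc 0 y, w s * k s y ^ q) ^ (1 / q) := by
  have hq0 : 0 < q := zero_lt_one.trans_le hq
  set f : ℝ → ℝ → ℝ≥0∞ := fun x y => if x < y then w x ^ q⁻¹ * (k x y * h y) else 0
  have hf : Measurable (Function.uncurry f) :=
    Measurable.ite (measurableSet_lt measurable_fst measurable_snd)
      ((hw.comp measurable_fst).pow_const _ |>.mul (hk.mul (hh.comp measurable_snd)))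
      measurable_const
  have hrow : ∀ x > 0, (∫⁻ y in Ioi 0, f x y) ^ q = (∫⁻ y in Ioi x, k x y * h y) ^ q * w x := by
    intro x hx
    have : (fun y => f x y) = (Ioi x).indicator fun y => w x ^ q⁻¹ * (k x y * h y) := by
      ext y; simp [f, indicator_apply]
    rw [this, lintegral_indicator measurableSet_Ioi, Measure.restrict_restrict measurableSet_Ioi,
      inter_eq_self_of_subset_left (Ioi_subset_Ioi hx.le),
      lintegral_const_mul (f := fun y => k x y * h y) _ (hk.of_uncurry_left.mul hh),
      ENNReal.mul_rpow_of_nonneg _ _ hq0.le, ENNReal.rpow_inv_rpow hq0.ne', mul_comm]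
  have hcol : ∀ y, (∫⁻ x in Ioi 0, f x y ^ q) ^ (1 / q) =
      h y * (∫⁻ s in Ioc 0 y, w s * k s y ^ q) ^ (1 / q) := by
    intro y
    have : (fun x => f x y ^ q) = (Iio y).indicator fun x => w x * k x y ^ q * h y ^ q := by
      ext x
      by_cases hxy : x < y
      · simp [f, hxy, ENNReal.mul_rpow_of_nonneg _ _ hq0.le, ENNReal.rpow_inv_rpow hq0.ne',
          mul_assoc]
      · simp [f, hxy, hq0]
    rw [this, lintegral_indicator measurableSet_Iio, Measure.restrict_restrict measurableSet_Iio,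
      Iio_inter_Ioi, setLIntegral_congr Ioo_ae_eq_Ioc,
      lintegral_mul_const (f := fun x => w x * k x y ^ q) _
        (hw.mul (hk.of_uncurry_right.pow_const q)),
      ENNReal.mul_rpow_of_nonneg _ _ (by positivity), ← ENNReal.rpow_mul,
      mul_one_div_cancel hq0.ne', ENNReal.rpow_one, mul_comm]
  calc (∫⁻ x in Ioi 0, (∫⁻ y in Ioi x, k x y * h y) ^ q * w x) ^ (1 / q)
      = (∫⁻ x in Ioi 0, (∫⁻ y in Ioi 0, f x y) ^ q) ^ (1 / q) := by
        rw [setLIntegral_congr_fun measurableSet_Ioi fun x hx => (hrow x hx).symm]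
    _ ≤ ∫⁻ y in Ioi 0, (∫⁻ x in Ioi 0, f x y ^ q) ^ (1 / q) := lintegral_lintegral_rpow_le hq hf
    _ = ∫⁻ y in Ioi 0, h y * (∫⁻ s in Ioc 0 y, w s * k s y ^ q) ^ (1 / q) := by simp_rw [hcol]

theorem isBound_of_O₁_lt (hq : 1 ≤ q) (hw : Measurable w) (hk : Measurable (Function.uncurry k))
    {C : ℝ≥0∞} (hC : O₁ q v w k < C) (hCtop : C ≠ ∞) : IsBound q v w k C := by
  intro h hh
  refine (lintegral_volterra_le hq hw hk hh).trans ?_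
  rw [← lintegral_const_mul' _ _ hCtop]
  refine lintegral_mono_ae ?_
  filter_upwards [ae_restrict_mem measurableSet_Ioi,
    ae_restrict_of_ae (ae_le_essSup_restrict_Ici (μ := volume) fun s => (v s)⁻¹)] with y hy hvy
  have hle : (∫⁻ s in Ioc 0 y, w s * k s y ^ q) ^ (1 / q) / v y ≤ C :=
    ((mul_le_mul_right hvy _).trans (le_O₁ hy)).trans hC.le
  rw [ENNReal.div_le_iff_le_mul (Or.inr hCtop) (Or.inr (pos_of_gt hC).ne')] at hle
  calc h y * (∫⁻ s in Ioc 0 y, w s * k s y ^ q) ^ (1 / q) ≤ h y * (C * v y) := by gcongr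
    _ = C * (h y * v y) := by ring

theorem bestConst_eq_O₁ (hq : 1 ≤ q) (hv : Measurable v) (hw : Measurable w)
    (hkm : Measurable (Function.uncurry k)) (hk : ∀ x, MonotoneOn (fun y => k x y) (Ici 0)) :
    bestConst q v w k = O₁ q v w k := by
  refine le_antisymm (le_of_forall_gt_imp_ge_of_dense fun C hC => ?_)
    (le_sInf fun C hC => hC.O₁_le (zero_lt_one.trans_le hq) hv hk)
  rcases eq_or_ne C ∞ with rfl | hCtop
  · exact le_top
  · exact sInf_le (isBound_of_O₁_lt hq hw hkm hC hCtop)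

theorem bestConst_mem_Icc (hq : 1 ≤ q) (hv : Measurable v) (hw : Measurable w)
    (hkm : Measurable (Function.uncurry k)) (hk1 : ∀ y, AntitoneOn (fun x => k x y) (Ici 0))
    (hk2 : ∀ x, MonotoneOn (fun y => k x y) (Ici 0)) :
    bestConst q v w k ∈ Icc (2⁻¹ * (O₁ q v w k + O₂ q v w k)) (O₁ q v w k + O₂ q v w k) := by
  rw [bestConst_eq_O₁ hq hv hw hkm hk2]
  refine ⟨?_, le_self_add⟩
  calc 2⁻¹ * (O₁ q v w k + O₂ q v w k) ≤ 2⁻¹ * (O₁ q v w k + O₁ q v w k) := by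
        gcongr
        exact O₂_le_O₁ (zero_lt_one.trans_le hq) hk1
    _ = O₁ q v w k := by rw [mul_add, ← add_mul, ENNReal.inv_two_add_inv_two, one_mul]

end Oinarov

end

theorem oinarov_kernel_L1_Lq_general
    (q : ℝ) (hq : 1 ≤ q)
    (v w : ℝ → ℝ≥0∞) (hv : IsWeight v) (hw : IsWeight w)
    (k : ℝ → ℝ → ℝ≥0∞) (hkm : Measurable (Function.uncurry k))
    (hk1 : ∀ y, AntitoneOn (fun x => k x y) (Set.Ici 0))
    (hk2 : ∀ x, MonotoneOn (fun y => k x y) (Set.Ici 0)) :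
    ∃ c₁ c₂ : ℝ≥0∞, 0 < c₁ ∧ c₂ < ∞ ∧
      c₁ * ((⨆ t ∈ Set.Ioi (0 : ℝ),
              (∫⁻ s in Set.Ioc 0 t, w s * k s t ^ q) ^ (1 / q) *
                essSup (fun s => (v s)⁻¹) (volume.restrict (Set.Ici t)))
          + ⨆ t ∈ Set.Ioi (0 : ℝ),
              (∫⁻ s in Set.Ioc 0 t, w s) ^ (1 / q) *
                essSup (fun s => k t s * (v s)⁻¹) (volume.restrict (Set.Ici t)))
        ≤ sInf {C : ℝ≥0∞ | ∀ h : ℝ → ℝ≥0∞, Measurable h →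
            (∫⁻ x in Set.Ioi (0 : ℝ),
                (∫⁻ y in Set.Ioi x, k x y * h y) ^ q * w x) ^ (1 / q)
              ≤ C * ∫⁻ y in Set.Ioi (0 : ℝ), h y * v y} ∧
      sInf {C : ℝ≥0∞ | ∀ h : ℝ → ℝ≥0∞, Measurable h →
            (∫⁻ x in Set.Ioi (0 : ℝ),
                (∫⁻ y in Set.Ioi x, k x y * h y) ^ q * w x) ^ (1 / q)
              ≤ C * ∫⁻ y in Set.Ioi (0 : ℝ), h y * v y}
        ≤ c₂ * ((⨆ t ∈ Set.Ioi (0 : ℝ),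
              (∫⁻ s in Set.Ioc 0 t, w s * k s t ^ q) ^ (1 / q) *
                essSup (fun s => (v s)⁻¹) (volume.restrict (Set.Ici t)))
          + ⨆ t ∈ Set.Ioi (0 : ℝ),
              (∫⁻ s in Set.Ioc 0 t, w s) ^ (1 / q) *
                essSup (fun s => k t s * (v s)⁻¹) (volume.restrict (Set.Ici t))) := by
  obtain ⟨hlower, hupper⟩ := Oinarov.bestConst_mem_Icc hq hv.1 hw.1 hkm hk1 hk2
  exact ⟨2⁻¹, 1, by simp, one_lt_top, hlower, hupper.trans_eq (one_mul _).symm⟩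

/-- Oinarov: for `1 ≤ q < ∞` and an Oinarov kernel `k`, the best
constant `C` in `(∫_0^∞ (∫_x^∞ k(x,y)h(y)dy)^q w(x)dx)^{1/q} ≤ C ∫_0^∞ h v`
satisfies `C ≈ O₁ + O₂`. -/
theorem oinarov_kernel_L1_Lq
    (q : ℝ) (hq : 1 ≤ q)
    (v w : ℝ → ℝ≥0∞) (hv : IsWeight v) (hw : IsWeight w)
    (k : ℝ → ℝ → ℝ≥0∞) (hkm : Measurable (Function.uncurry k))
    (hk1 : ∀ y, AntitoneOn (fun x => k x y) (Set.Ici 0))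
    (hk2 : ∀ x, MonotoneOn (fun y => k x y) (Set.Ici 0))
    (d : ℝ≥0∞) (hd : 0 < d) (hd' : d < ∞)
    (hk3 : ∀ x y z : ℝ, 0 ≤ x → x < y → y < z → k x z ≤ d * (k x y + k y z))
    (hk4 : ∀ y > (0 : ℝ), 0 < k 0 y) :
    ∃ c₁ c₂ : ℝ≥0∞, 0 < c₁ ∧ c₂ < ∞ ∧
      c₁ * ((⨆ t ∈ Set.Ioi (0 : ℝ),
              (∫⁻ s in Set.Ioc 0 t, w s * k s t ^ q) ^ (1 / q) *
                essSup (fun s => (v s)⁻¹) (volume.restrict (Set.Ici t)))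
          + ⨆ t ∈ Set.Ioi (0 : ℝ),
              (∫⁻ s in Set.Ioc 0 t, w s) ^ (1 / q) *
                essSup (fun s => k t s * (v s)⁻¹) (volume.restrict (Set.Ici t)))
        ≤ sInf {C : ℝ≥0∞ | ∀ h : ℝ → ℝ≥0∞, Measurable h →
            (∫⁻ x in Set.Ioi (0 : ℝ),
                (∫⁻ y in Set.Ioi x, k x y * h y) ^ q * w x) ^ (1 / q)
              ≤ C * ∫⁻ y in Set.Ioi (0 : ℝ), h y * v y} ∧
      sInf {C : ℝ≥0∞ | ∀ h : ℝ → ℝ≥0∞, Measurable h →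
            (∫⁻ x in Set.Ioi (0 : ℝ),
                (∫⁻ y in Set.Ioi x, k x y * h y) ^ q * w x) ^ (1 / q)
              ≤ C * ∫⁻ y in Set.Ioi (0 : ℝ), h y * v y}
        ≤ c₂ * ((⨆ t ∈ Set.Ioi (0 : ℝ),
              (∫⁻ s in Set.Ioc 0 t, w s * k s t ^ q) ^ (1 / q) *
                essSup (fun s => (v s)⁻¹) (volume.restrict (Set.Ici t)))
          + ⨆ t ∈ Set.Ioi (0 : ℝ),
              (∫⁻ s in Set.Ioc 0 t, w s) ^ (1 / q) *
                essSup (fun s => k t s * (v s)⁻¹) (volume.restrict (Set.Ici t))) :=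
  oinarov_kernel_L1_Lq_general q hq v w hv hw k hkm hk1 hk2
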